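/- arXiv:1310.6158 — 3 statements merged into one kernel-verified Lean document; each statement's English description precedes it below -/
import Mathlib

section
/- Let p be prime, K a number field, N the norm form of K, and f ∈ ℤ[x] a cubic with homogenization f(a,b). Suppose the equation f(t) = N(x₁,…,x_k) ≠ 0 has a solution over ℚ_p. Then there exist integers a₀, b₀ and l ∈ ℕ with b₀ ≢ 0 (mod p^l) and f(a₀,b₀) ≢ 0 (mod p^l), such that for all integers a ≡ a₀ (mod p^l) and b ≡ b₀ (mod p^l), both b and f(a,b) lie in N(ℚ_p^k) \ {0}. -/
open NumberField Polynomial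
open scoped TensorProduct

/-- The homogenization `f(a,b) = b³ f(a/b)` of a cubic polynomial `f`. -/
noncomputable def cubicHomog (f : Polynomial ℤ) (a b : ℤ) : ℤ :=
  ∑ i ∈ Finset.range 4, f.coeff i * a ^ i * b ^ (3 - i)

/-- The set of values of the norm form of `K/ℚ` on `ℚ_p^k`, realized via the norm of the
étale algebra `ℚ_p ⊗[ℚ] K`. -/
noncomputable def padicNormFormValues (K : Type) [Field K] [NumberField K] (k : ℕ)
    (ω : Module.Basis (Fin k) ℚ K) (p : ℕ) [Fact p.Prime] : Set ℚ_[p] :=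
  Set.range fun x : Fin k → ℚ_[p] =>
    Algebra.norm ℚ_[p] (∑ i, x i • ((1 : ℚ_[p]) ⊗ₜ[ℚ] (ω i)))

/-!
The nonzero values of the norm form over `ℚ_p` form an open set: near a nonzero value `v`,
every `c` has `c / v` so close to `1` that Hensel's lemma makes it a `k`-th power, and
`c = (c / v) · v` is again a value since `w ^ k = N(w)`. Hence `f(t) = N(x)` can be moved to
a rational point `t = n / d`, which is rewritten as `(n d^(k-1)) / d^k` so that `b₀ = d^k`
is a norm and `f(a₀, b₀) = (d³)^k f(t)` is one too. Finally, integers that are `p`-adically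
close to `b₀` and `f(a₀, b₀)` stay in this open set.
-/

open Filter

theorem PadicInt.exists_pow_eq_of_norm_sub_one_lt {p : ℕ} [Fact p.Prime] (k : ℕ) {u : ℤ_[p]}
    (h : ‖u - 1‖ < ‖(k : ℤ_[p])‖ ^ 2) : ∃ w : ℤ_[p], w ^ k = u := by
  have hnorm : ‖aeval (1 : ℤ_[p]) (X ^ k - C u)‖ <
      ‖aeval (1 : ℤ_[p]) (derivative (X ^ k - C u))‖ ^ 2 := by
    simpa [norm_sub_rev, derivative_X_pow] using h
  obtain ⟨w, hw, -⟩ := hensels_lemma hnorm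
  exact ⟨w, by simpa [sub_eq_zero] using hw⟩

theorem Padic.exists_pow_eq_of_norm_sub_one_lt {p : ℕ} [Fact p.Prime] (k : ℕ) {u : ℚ_[p]}
    (h : ‖u - 1‖ < ‖(k : ℚ_[p])‖ ^ 2) : ∃ w : ℚ_[p], w ^ k = u := by
  have hk : ‖(k : ℚ_[p])‖ ≤ 1 := IsUltrametricDist.norm_natCast_le_one ℚ_[p] k
  have hu : ‖u‖ ≤ 1 := by
    calc ‖u‖ = ‖(u - 1) + 1‖ := by rw [sub_add_cancel]
      _ ≤ max ‖u - 1‖ ‖(1 : ℚ_[p])‖ := Padic.nonarchimedean _ _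
      _ ≤ 1 := max_le (h.trans_le (pow_le_one₀ (norm_nonneg _) hk)).le norm_one.le
  obtain ⟨w, hw⟩ := PadicInt.exists_pow_eq_of_norm_sub_one_lt (u := ⟨u, hu⟩) k h
  exact ⟨w, by simpa using congrArg ((↑) : ℤ_[p] → ℚ_[p]) hw⟩

theorem cubicHomog_modEq (f : ℤ[X]) {n a a' b b' : ℤ} (ha : a ≡ a' [ZMOD n])
    (hb : b ≡ b' [ZMOD n]) : cubicHomog f a b ≡ cubicHomog f a' b' [ZMOD n] := by
  unfold cubicHomog
  gcongr

theorem cubicHomog_cast_eq {F : Type*} [Field F] {f : ℤ[X]} (hf : f.natDegree ≤ 3) (a : ℤ)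
    {b : ℤ} (hb : (b : F) ≠ 0) :
    (cubicHomog f a b : F) = (b : F) ^ 3 * (f.map (Int.castRingHom F)).eval ((a : F) / b) := by
  rw [eval_eq_sum_range' (n := 4) ((natDegree_map_le).trans_lt (by omega)), Finset.mul_sum,
    cubicHomog]
  push_cast
  refine Finset.sum_congr rfl fun i hi => ?_
  have hi : i ≤ 3 := Nat.lt_succ_iff.mp (Finset.mem_range.mp hi)
  rw [coeff_map, eq_intCast, div_pow, ← Nat.sub_add_cancel hi, pow_add]
  field_simp
  rw [Nat.sub_add_cancel hi]

section padicNormFormValues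

variable {K : Type} [Field K] [NumberField K] {k : ℕ} (ω : Module.Basis (Fin k) ℚ K)
  {p : ℕ} [Fact p.Prime]

theorem padicNormFormValues_eq_mrange :
    padicNormFormValues K k ω p = MonoidHom.mrange (Algebra.norm ℚ_[p] (S := ℚ_[p] ⊗[ℚ] K)) := by
  ext v
  refine ⟨fun ⟨x, hx⟩ => ⟨_, hx⟩, fun ⟨y, hy⟩ => ⟨(ω.baseChange ℚ_[p]).repr y, ?_⟩⟩
  rw [← hy]
  conv_rhs => rw [← (ω.baseChange ℚ_[p]).sum_repr y]
  simp only [Module.Basis.baseChange_apply]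

theorem one_mem_padicNormFormValues : (1 : ℚ_[p]) ∈ padicNormFormValues K k ω p := by
  rw [padicNormFormValues_eq_mrange]
  exact one_mem _

theorem pow_mul_mem_padicNormFormValues {v : ℚ_[p]} (hv : v ∈ padicNormFormValues K k ω p)
    (w : ℚ_[p]) : w ^ k * v ∈ padicNormFormValues K k ω p := by
  rw [padicNormFormValues_eq_mrange] at hv ⊢
  refine Submonoid.mul_mem _ ⟨algebraMap ℚ_[p] (ℚ_[p] ⊗[ℚ] K) w, ?_⟩ hv
  rw [Algebra.norm_algebraMap, Module.finrank_eq_card_basis (ω.baseChange ℚ_[p]),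
    Fintype.card_fin]

theorem pow_mul_mem_padicNormFormValues_diff_zero {v : ℚ_[p]}
    (hv : v ∈ padicNormFormValues K k ω p \ {0}) {w : ℚ_[p]} (hw : w ≠ 0) :
    w ^ k * v ∈ padicNormFormValues K k ω p \ {0} :=
  ⟨pow_mul_mem_padicNormFormValues ω hv.1 w, mul_ne_zero (pow_ne_zero k hw) hv.2⟩

theorem isOpen_padicNormFormValues_diff_zero :
    IsOpen (padicNormFormValues K k ω p \ {0}) := by
  have hk : ‖(k : ℚ_[p])‖ ≠ 0 := by
    have : Nonempty (Fin k) := ω.index_nonempty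
    simpa [Nat.pos_iff_ne_zero] using Fin.pos_iff_nonempty.mpr this
  rw [Metric.isOpen_iff]
  rintro v ⟨hv, hv0 : v ≠ 0⟩
  refine ⟨‖v‖ * ‖(k : ℚ_[p])‖ ^ 2, by positivity, fun c hc => ?_⟩
  rw [Metric.mem_ball, dist_eq_norm] at hc
  have hk1 : ‖(k : ℚ_[p])‖ ^ 2 ≤ 1 :=
    pow_le_one₀ (norm_nonneg _) (IsUltrametricDist.norm_natCast_le_one ℚ_[p] k)
  have hcv : ‖c - v‖ < ‖v‖ := hc.trans_le (mul_le_of_le_one_right (norm_nonneg _) hk1)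
  have hc0 : c ≠ 0 := by
    rintro rfl
    simp at hcv
  obtain ⟨w, hw⟩ : ∃ w : ℚ_[p], w ^ k = c / v := by
    refine Padic.exists_pow_eq_of_norm_sub_one_lt k ?_
    rwa [div_sub_one hv0, norm_div, div_lt_iff₀ (norm_pos_iff.mpr hv0), mul_comm]
  refine ⟨?_, hc0⟩
  rw [show c = w ^ k * v by rw [hw, div_mul_cancel₀ c hv0]]
  exact pow_mul_mem_padicNormFormValues ω hv w

theorem exists_cubicHomog_mem_padicNormFormValues {f : ℤ[X]} (hf : f.natDegree ≤ 3) {r : ℚ}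
    (hr : (f.map (Int.castRingHom ℚ_[p])).eval (r : ℚ_[p]) ∈ padicNormFormValues K k ω p \ {0}) :
    ∃ a₀ b₀ : ℤ, (b₀ : ℚ_[p]) ∈ padicNormFormValues K k ω p \ {0} ∧
      (cubicHomog f a₀ b₀ : ℚ_[p]) ∈ padicNormFormValues K k ω p \ {0} := by
  have hk : k ≠ 0 := (Fin.pos_iff_nonempty.mpr ω.index_nonempty).ne'
  have hd : (r.den : ℚ_[p]) ≠ 0 := Nat.cast_ne_zero.mpr r.den_nz
  have hb₀ : ((r.den ^ k : ℤ) : ℚ_[p]) = (r.den : ℚ_[p]) ^ k * 1 := by push_cast; ring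
  have hr₀ : ((r.num * r.den ^ (k - 1) : ℤ) : ℚ_[p]) / ((r.den ^ k : ℤ) : ℚ_[p]) = r := by
    rw [Rat.cast_def, ← Nat.sub_add_cancel (Nat.one_le_iff_ne_zero.mpr hk)]
    push_cast
    field_simp
    ring
  have hb₀_mem : ((r.den ^ k : ℤ) : ℚ_[p]) ∈ padicNormFormValues K k ω p \ {0} :=
    hb₀ ▸ pow_mul_mem_padicNormFormValues_diff_zero ω
      ⟨one_mem_padicNormFormValues ω, one_ne_zero⟩ hd
  refine ⟨r.num * r.den ^ (k - 1), r.den ^ k, hb₀_mem, ?_⟩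
  rw [cubicHomog_cast_eq hf _ hb₀_mem.2, hr₀, hb₀, mul_one, ← pow_mul, mul_comm k, pow_mul]
  exact pow_mul_mem_padicNormFormValues_diff_zero ω hr (pow_ne_zero 3 hd)

end padicNormFormValues

theorem eventually_forall_modEq_intCast_mem {p : ℕ} [Fact p.Prime] {U : Set ℚ_[p]}
    (hU : IsOpen U) {z : ℤ} (hz : (z : ℚ_[p]) ∈ U) :
    ∀ᶠ l in atTop, ∀ z' : ℤ, z' ≡ z [ZMOD (p : ℤ) ^ l] → (z' : ℚ_[p]) ∈ U := by
  obtain ⟨ε, hε, hball⟩ := Metric.isOpen_iff.mp hU _ hz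
  have hsmall : ∀ᶠ l in atTop, ‖(p : ℚ_[p])‖ ^ l < ε :=
    (tendsto_pow_atTop_nhds_zero_of_lt_one (norm_nonneg _) Padic.norm_p_lt_one).eventually
      (gt_mem_nhds hε)
  filter_upwards [hsmall] with l hl z' hz'
  obtain ⟨m, hm⟩ := hz'.symm.dvd
  apply hball
  rw [Metric.mem_ball, dist_eq_norm, ← Int.cast_sub, hm]
  calc ‖(((p : ℤ) ^ l * m : ℤ) : ℚ_[p])‖ = ‖(p : ℚ_[p])‖ ^ l * ‖(m : ℚ_[p])‖ := by
        push_cast; rw [norm_mul, norm_pow]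
    _ ≤ ‖(p : ℚ_[p])‖ ^ l := mul_le_of_le_one_right (by positivity) (Padic.norm_int_le_one m)
    _ < ε := hl

/-- If `f(t) = N(x₁,…,x_k) ≠ 0` has a solution over `ℚ_p`, then there are integers
`a₀, b₀` and `l ∈ ℕ` with `b₀, f(a₀,b₀) ≢ 0 (mod p^l)` such that for all integers
`a ≡ a₀` and `b ≡ b₀ (mod p^l)`, both `b` and `f(a,b)` are nonzero values of the norm
form over `ℚ_p`. -/
theorem stmt_4 (p : ℕ) [hp : Fact p.Prime] (K : Type) [Field K] [NumberField K]
    (k : ℕ) (ω : Module.Basis (Fin k) ℚ K)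
    (f : Polynomial ℤ) (hdeg : f.natDegree = 3)
    (hsol : ∃ t : ℚ_[p], ∃ x : Fin k → ℚ_[p],
      (f.map (Int.castRingHom ℚ_[p])).eval t =
        Algebra.norm ℚ_[p] (∑ i, x i • ((1 : ℚ_[p]) ⊗ₜ[ℚ] (ω i))) ∧
      Algebra.norm ℚ_[p] (∑ i, x i • ((1 : ℚ_[p]) ⊗ₜ[ℚ] (ω i))) ≠ 0) :
    ∃ (a₀ b₀ : ℤ) (l : ℕ),
      ¬ ((p : ℤ) ^ l ∣ b₀) ∧ ¬ ((p : ℤ) ^ l ∣ cubicHomog f a₀ b₀) ∧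
      ∀ a b : ℤ, a ≡ a₀ [ZMOD (p : ℤ) ^ l] → b ≡ b₀ [ZMOD (p : ℤ) ^ l] →
        ((b : ℚ_[p]) ∈ padicNormFormValues K k ω p ∧ (b : ℚ_[p]) ≠ 0) ∧
        ((cubicHomog f a b : ℚ_[p]) ∈ padicNormFormValues K k ω p ∧
          (cubicHomog f a b : ℚ_[p]) ≠ 0) := by
  obtain ⟨t, x, hft, hx⟩ := hsol
  have hU := isOpen_padicNormFormValues_diff_zero ω (p := p)
  have hft_mem : (f.map (Int.castRingHom ℚ_[p])).eval t ∈ padicNormFormValues K k ω p \ {0} :=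
    hft ▸ ⟨⟨x, rfl⟩, hx⟩
  obtain ⟨r, hr⟩ := (Padic.denseRange_ratCast p).exists_mem_open
    (hU.preimage (f.map (Int.castRingHom ℚ_[p])).continuous) ⟨t, hft_mem⟩
  obtain ⟨a₀, b₀, hb₀, hc₀⟩ := exists_cubicHomog_mem_padicNormFormValues ω hdeg.le hr
  obtain ⟨l, hlb, hlc⟩ := ((eventually_forall_modEq_intCast_mem hU hb₀).and
    (eventually_forall_modEq_intCast_mem hU hc₀)).exists
  have hU0 : ((0 : ℤ) : ℚ_[p]) ∉ padicNormFormValues K k ω p \ {0} := fun h => h.2 Int.cast_zero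
  refine ⟨a₀, b₀, l, fun h => hU0 (hlb 0 (Int.modEq_zero_iff_dvd.mpr h).symm),
    fun h => hU0 (hlc 0 (Int.modEq_zero_iff_dvd.mpr h).symm),
    fun a b ha hb => ⟨hlb b hb, hlc _ (cubicHomog_modEq f ha hb)⟩⟩
end

section
/- Let d, e, Δ ∈ ℕ with gcd(d,Δ) = 1 and e | d. Let (a,b) ∈ ℤ² with gcd(a,b,d) = 1, and let λ(x,eΔ) be the lattice of points in ℤ² that are congruent modulo d to an integer multiple of (a,b) and are divisible by eΔ (i.e. both coordinates divisible by eΔ). Then λ(x,eΔ) is a sublattice of ℤ² of index deΔ², i.e. |det λ(x,eΔ)| = deΔ². -/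
/-!
Reduce `ℤ²` modulo `d` and modulo `Δ`. Since `e ∣ d` and `e` is prime to `gcd(a, b)`, the
conditions "congruent mod `d` to a multiple of `(a, b)`" and "divisible by `e`" together say that
`y mod d` lies in the cyclic group generated by `e • (a, b)`, whose order is `d / e`; this
subgroup of `(ℤ/d)²` has index `d² / (d / e) = d e`. Divisibility by `Δ` is the kernel of
reduction mod `Δ`, of index `Δ²`. The two indices are coprime, so the index of the intersection
is their product.
-/

open AddSubgroup

namespace AddSubgroup

theorem index_inf_of_coprime {G : Type*} [AddGroup G] {H K : AddSubgroup G}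
    (h : H.index.Coprime K.index) : (H ⊓ K).index = H.index * K.index := by
  rcases Nat.eq_zero_or_pos (H ⊓ K).index with h0 | hpos
  · have : H.index = 0 ∨ K.index = 0 := by
      by_contra! hne
      exact index_inf_ne_zero hne.1 hne.2 h0
    rcases this with h' | h' <;> simp [h0, h']
  · exact le_antisymm index_inf_le <| Nat.le_of_dvd hpos <|
      h.mul_dvd_of_dvd_of_dvd (index_dvd_of_le inf_le_left) (index_dvd_of_le inf_le_right)

end AddSubgroup

theorem IsCoprime.mul_dvd_iff {R : Type*} [CommSemiring R] {x y z : R} (h : IsCoprime x y) :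
    x * y ∣ z ↔ x ∣ z ∧ y ∣ z :=
  ⟨fun hz => ⟨(dvd_mul_right x y).trans hz, (dvd_mul_left y x).trans hz⟩,
    fun hz => h.mul_dvd hz.1 hz.2⟩

theorem Int.dvd_of_dvd_mul_of_isCoprime_gcd {k m a b : ℤ} (ha : k ∣ m * a) (hb : k ∣ m * b)
    (h : IsCoprime k (Int.gcd a b)) : k ∣ m := by
  refine h.dvd_of_dvd_mul_right ?_
  have hbezout : m * Int.gcd a b = m * a * a.gcdA b + m * b * a.gcdB b := by
    rw [Int.gcd_eq_gcd_ab]; ring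
  rw [hbezout]
  exact dvd_add (ha.mul_right _) (hb.mul_right _)

theorem Int.exists_modEq_mul_and_dvd_iff {d e a b y₁ y₂ : ℤ} (he : e ∣ d)
    (hcop : IsCoprime e (Int.gcd a b)) :
    ((∃ k, y₁ ≡ k * a [ZMOD d] ∧ y₂ ≡ k * b [ZMOD d]) ∧ e ∣ y₁ ∧ e ∣ y₂) ↔
      ∃ k, y₁ ≡ k * (e * a) [ZMOD d] ∧ y₂ ≡ k * (e * b) [ZMOD d] := by
  constructor
  · rintro ⟨⟨k, h₁, h₂⟩, hy₁, hy₂⟩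
    obtain ⟨m, rfl⟩ : e ∣ k := Int.dvd_of_dvd_mul_of_isCoprime_gcd
      ((h₁.of_dvd he).dvd_iff.mp hy₁) ((h₂.of_dvd he).dvd_iff.mp hy₂) hcop
    exact ⟨m, by rwa [mul_left_comm, ← mul_assoc], by rwa [mul_left_comm, ← mul_assoc]⟩
  · rintro ⟨k, h₁, h₂⟩
    refine ⟨⟨k * e, by rwa [mul_assoc], by rwa [mul_assoc]⟩, ?_, ?_⟩
    · exact (h₁.of_dvd he).dvd_iff.mpr (Dvd.intro _ rfl |>.mul_left k)
    · exact (h₂.of_dvd he).dvd_iff.mpr (Dvd.intro _ rfl |>.mul_left k)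

section pairReduction

variable (n : ℕ)

def pairReduction : ℤ × ℤ →+ ZMod n × ZMod n :=
  (Int.castAddHom (ZMod n)).prodMap (Int.castAddHom (ZMod n))

@[simp]
theorem pairReduction_apply (y : ℤ × ℤ) : pairReduction n y = ((y.1 : ZMod n), (y.2 : ZMod n)) :=
  rfl

theorem pairReduction_surjective : Function.Surjective (pairReduction n) :=
  ZMod.intCast_surjective.prodMap ZMod.intCast_surjective

theorem mem_ker_pairReduction {y : ℤ × ℤ} :
    y ∈ (pairReduction n).ker ↔ (n : ℤ) ∣ y.1 ∧ (n : ℤ) ∣ y.2 := by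
  simp [Prod.ext_iff, ZMod.intCast_zmod_eq_zero_iff_dvd]

theorem index_ker_pairReduction : (pairReduction n).ker.index = n ^ 2 := by
  rw [← AddMonoidHom.comap_bot, index_comap_of_surjective _ (pairReduction_surjective n),
    index_bot, Nat.card_prod, Nat.card_zmod, sq]

theorem pairReduction_mem_zmultiples_iff {v y : ℤ × ℤ} :
    pairReduction n y ∈ zmultiples (pairReduction n v) ↔
      ∃ k : ℤ, y.1 ≡ k * v.1 [ZMOD n] ∧ y.2 ≡ k * v.2 [ZMOD n] := by
  simp_rw [mem_zmultiples_iff, ← map_zsmul]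
  simp only [pairReduction_apply, Prod.ext_iff, Prod.smul_fst, Prod.smul_snd, smul_eq_mul,
    ZMod.intCast_eq_intCast_iff]
  exact exists_congr fun k => ⟨fun h => ⟨h.1.symm, h.2.symm⟩, fun h => ⟨h.1.symm, h.2.symm⟩⟩

theorem addOrderOf_pairReduction {a b : ℤ} (h : IsCoprime (Int.gcd a b : ℤ) n) :
    addOrderOf (pairReduction n (a, b)) = n := by
  refine Nat.dvd_right_iff_eq.mp fun m => ?_
  rw [addOrderOf_dvd_iff_nsmul_eq_zero, ← map_nsmul, ← AddMonoidHom.mem_ker,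
    mem_ker_pairReduction]
  simp only [nsmul_eq_mul]
  refine ⟨fun ⟨ha, hb⟩ => ?_, fun hm => ?_⟩
  · exact Int.natCast_dvd_natCast.mp (Int.dvd_of_dvd_mul_of_isCoprime_gcd ha hb h.symm)
  · have hm : (n : ℤ) ∣ m := Int.natCast_dvd_natCast.mpr hm
    exact ⟨hm.mul_right a, hm.mul_right b⟩

theorem index_comap_zmultiples_pairReduction [NeZero n] {a b : ℤ} {e : ℕ} (he : e ∣ n)
    (h : IsCoprime (Int.gcd a b : ℤ) n) :
    (comap (pairReduction n) (zmultiples (pairReduction n (e * a, e * b)))).index = n * e := by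
  have hord : addOrderOf (pairReduction n (e * a, e * b)) = n / e := by
    have : ((e : ℤ) * a, (e : ℤ) * b) = e • (a, b) := by simp
    rw [this, map_nsmul, addOrderOf_nsmul, addOrderOf_pairReduction n h, Nat.gcd_eq_right he]
  have hcard := index_mul_card (zmultiples (pairReduction n (e * a, e * b)))
  rw [Nat.card_zmultiples, hord, Nat.card_prod, Nat.card_zmod] at hcard
  have hpos : 0 < n / e :=
    Nat.div_pos (Nat.le_of_dvd (NeZero.pos n) he) (Nat.pos_of_dvd_of_pos he (NeZero.pos n))
  rw [index_comap_of_surjective _ (pairReduction_surjective n)]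
  refine Nat.eq_of_mul_eq_mul_right hpos (hcard.trans ?_)
  rw [mul_assoc, Nat.mul_div_cancel' he]

end pairReduction

theorem stmt_6_general (d e Δ : ℕ) (hd : 0 < d) (he : e ∣ d) (hcop : Nat.Coprime d Δ)
    (a b : ℤ) (hab : Int.gcd (Int.gcd a b : ℤ) (d : ℤ) = 1)
    (H : AddSubgroup (ℤ × ℤ))
    (hH : (H : Set (ℤ × ℤ)) = {y : ℤ × ℤ |
      (∃ lam : ℤ, y.1 ≡ lam * a [ZMOD (d : ℤ)] ∧ y.2 ≡ lam * b [ZMOD (d : ℤ)]) ∧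
      ((e * Δ : ℤ) ∣ y.1 ∧ (e * Δ : ℤ) ∣ y.2)}) :
    H.index = d * e * Δ ^ 2 := by
  have : NeZero d := ⟨hd.ne'⟩
  have hed : (e : ℤ) ∣ d := Int.natCast_dvd_natCast.mpr he
  have habd : IsCoprime (Int.gcd a b : ℤ) d := Int.isCoprime_iff_gcd_eq_one.mpr hab
  have heΔ : IsCoprime (e : ℤ) Δ :=
    Int.isCoprime_iff_gcd_eq_one.mpr (Nat.Coprime.coprime_dvd_left he hcop)
  have hH' : H = comap (pairReduction d) (zmultiples (pairReduction d (e * a, e * b))) ⊓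
      (pairReduction Δ).ker := by
    ext ⟨y₁, y₂⟩
    rw [← SetLike.mem_coe, hH, Set.mem_ofPred_eq, mem_inf, mem_comap,
      pairReduction_mem_zmultiples_iff, mem_ker_pairReduction, heΔ.mul_dvd_iff, heΔ.mul_dvd_iff,
      ← Int.exists_modEq_mul_and_dvd_iff hed (habd.of_isCoprime_of_dvd_right hed).symm]
    tauto
  rw [hH', index_inf_of_coprime] <;>
    rw [index_comap_zmultiples_pairReduction d he habd, index_ker_pairReduction]
  exact (Nat.Coprime.mul_left hcop (Nat.Coprime.coprime_dvd_left he hcop)).pow_right 2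

/-- Let `d, e, Δ ∈ ℕ` with `gcd(d,Δ) = 1` and `e ∣ d`, and let `(a,b)` be primitive
modulo `d`.  The lattice of points of `ℤ²` congruent mod `d` to an integer multiple of
`(a,b)` and with both coordinates divisible by `eΔ` has determinant (= index in `ℤ²`)
equal to `d·e·Δ²`. -/
theorem stmt_6 (d e Δ : ℕ) (hd : 0 < d) (hΔ : 0 < Δ) (he : e ∣ d) (hcop : Nat.Coprime d Δ)
    (a b : ℤ) (hab : Int.gcd (Int.gcd a b : ℤ) (d : ℤ) = 1)
    (H : AddSubgroup (ℤ × ℤ))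
    (hH : (H : Set (ℤ × ℤ)) = {y : ℤ × ℤ |
      (∃ lam : ℤ, y.1 ≡ lam * a [ZMOD (d : ℤ)] ∧ y.2 ≡ lam * b [ZMOD (d : ℤ)]) ∧
      ((e * Δ : ℤ) ∣ y.1 ∧ (e * Δ : ℤ) ∣ y.2)}) :
    H.index = d * e * Δ ^ 2 :=
  stmt_6_general d e Δ hd he hcop a b hab H hH
end

section
/- Let f be a monic cubic polynomial over ℤ and p a prime not dividing the discriminant of f. Let ρ₁(d) be the number of pairs (a,b) mod d with f(a,b) ≡ 0 (mod d), where f(a,b) is the homogenization of f. Then for all α ∈ ℕ, ρ₁(p^α) ≪ p^{4α/3}, with an absolute implied constant; in particular ρ₁(p^α) ≤ 3 p^{α+⌈α/3⌉}/(p−1) + p^{2(α−⌈α/3⌉)}. -/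
/-!
Split the zeros `(a, b)` of the form modulo `p^α` according to whether `b` is a unit. The form
being monic, `p ∣ b` forces `p ∣ a`, so the remaining zeros are `(p a', p b')` with
`f(a', b') ≡ 0 (mod p^(α-3))`; lifting `(a', b')` from `ZMod (p^(α-3))` to `ZMod (p^(α-1))`
gives `p^4 ρ₁(p^(α-3))` of them. The zeros with `b` a unit are `(t b, b)` with `t` a root of
`f` mod `p^α`. As `p ∤ disc f`, every root mod `p` is simple, so by Hensel's lemma a root
mod `p^α` is determined by its reduction mod `p`, and there are at most three. Hence
`ρ₁(p^α) ≤ 3 φ(p^α) + p^4 ρ₁(p^(α-3))`, which unwinds to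
`ρ₁(p^α) ≤ 3 p^(α-1) (p^⌈α/3⌉ - 1) + p^(2(α-⌈α/3⌉))`.
-/

open Polynomial

lemma Nat.card_subtype_eq_card_and_add_card_and_not {α : Type*} [Finite α] (P Q : α → Prop) :
    Nat.card {x // P x} = Nat.card {x // P x ∧ Q x} + Nat.card {x // P x ∧ ¬Q x} :=
  (Set.ncard_inter_add_ncard_sdiff_eq_ncard {x | P x} {x | Q x}).symm

lemma AddMonoidHom.card_preimage_of_surjective {G H : Type*} [AddGroup G] [AddGroup H]
    (f : G →+ H) (hf : Function.Surjective f) (s : Set H) :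
    Nat.card (f ⁻¹' s) = Nat.card s * Nat.card f.ker := by
  rw [← Nat.card_prod]
  set σ := Function.surjInv hf
  have hσ (h : H) : f (σ h) = h := Function.surjInv_eq hf h
  exact Nat.card_congr
    { toFun := fun g => (⟨f g, g.2⟩, ⟨-σ (f g) + g, by simp [hσ]⟩)
      invFun := fun hk => ⟨σ hk.1 + hk.2, by simp [hσ, show f hk.2 = 0 from hk.2.2]⟩
      left_inv := fun g => by simp
      right_inv := fun hk => by ext <;> simp [hσ, show f hk.2 = 0 from hk.2.2] }

namespace Cubic

variable {R S T : Type*} [CommRing R] [CommRing S] [Algebra R S] [CommRing T] [Algebra R T]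

def form (P : Cubic R) (x y : S) : S :=
  algebraMap R S P.a * x ^ 3 + algebraMap R S P.b * x ^ 2 * y + algebraMap R S P.c * x * y ^ 2 +
    algebraMap R S P.d * y ^ 3

lemma map_form (f : S →ₐ[R] T) (P : Cubic R) (x y : S) :
    f (P.form x y) = P.form (f x) (f y) := by
  simp [form]

lemma form_mul_mul (P : Cubic R) (t x y : S) : P.form (t * x) (t * y) = t ^ 3 * P.form x y := by
  simp only [form]; ring

lemma form_mul_self (P : Cubic R) (t y : S) : P.form (t * y) y = y ^ 3 * aeval t P.toPoly := by
  simp only [form, toPoly, map_add, map_mul, aeval_C, aeval_X, map_pow]; ring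

lemma card_form_eq_zero_isUnit (P : Cubic R) :
    Nat.card {x : S × S // P.form x.1 x.2 = 0 ∧ IsUnit x.2} =
      Nat.card {t : S // aeval t P.toPoly = 0} * Nat.card Sˣ := by
  have key (t : S) (u : Sˣ) : P.form (t * u) u = 0 ↔ aeval t P.toPoly = 0 := by
    rw [form_mul_self, (u.isUnit.pow 3).mul_right_eq_zero]
  have cancel {y : S} (x : S) (hy : IsUnit y) : x * ↑hy.unit⁻¹ * y = x :=
    Units.inv_mul_cancel_right x hy.unit
  rw [← Nat.card_prod]
  refine Nat.card_congr
    { toFun := fun x => (⟨x.1.1 * ↑x.2.2.unit⁻¹, ?_⟩, x.2.2.unit)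
      invFun := fun tu => ⟨(tu.1.1 * tu.2, tu.2), (key _ _).2 tu.1.2, tu.2.isUnit⟩
      left_inv := fun x => by simp [cancel]
      right_inv := fun tu => by ext <;> simp }
  rw [← key _ x.2.2.unit, IsUnit.unit_spec, cancel]
  exact x.2.1

lemma discr_eq_zero_of_aeval_derivative (P : Cubic R) (ha : P.a = 1) {t : S}
    (h : aeval t P.toPoly = 0) (h' : aeval t (derivative P.toPoly) = 0) :
    algebraMap R S P.discr = 0 := by
  simp only [toPoly, ha, map_one, one_mul, map_add, map_pow, aeval_X, map_mul, aeval_C,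
    derivative_X_pow_succ, Nat.cast_ofNat, map_ofNat, derivative_mul, derivative_C,
    zero_mul, Nat.cast_one, pow_one, zero_add, derivative_X, mul_one, add_zero] at h h'
  simp only [discr, ha, map_sub, map_add, map_mul, map_pow, map_one, map_ofNat, mul_one]
  set b := algebraMap R S P.b
  set c := algebraMap R S P.c
  set d := algebraMap R S P.d
  -- the discriminant of a monic cubic lies in the ideal generated by it and its derivative
  linear_combination ((18*c-6*b^2)*t + 15*b*c - 4*b^3 - 27*d) * h +
    ((2*b^2-6*c)*t^2 + (2*b^3-7*b*c+9*d)*t + (b^2*c+3*b*d-4*c^2)) * h'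

lemma card_aeval_eq_zero_le [IsDomain S] (P : Cubic R) (ha : algebraMap R S P.a ≠ 0) :
    Nat.card {t : S // aeval t P.toPoly = 0} ≤ 3 := by
  classical
  have hQ : (P.map (algebraMap R S)).toPoly ≠ 0 := ne_zero_of_a_ne_zero ha
  calc Nat.card {t : S // aeval t P.toPoly = 0}
      = Nat.card (P.map (algebraMap R S)).roots.toFinset :=
        Nat.card_congr <| Equiv.subtypeEquivRight fun t => by
          rw [Multiset.mem_toFinset, mem_roots_iff hQ]
          simp [toPoly, map]
    _ ≤ 3 := (Nat.card_eq_finsetCard _).trans_le card_roots_le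

/-- The paper's `ρ₁(M)`. -/
noncomputable def numZerosMod (c : Cubic ℤ) (M : ℕ) : ℕ :=
  Nat.card {x : ZMod M × ZMod M // c.form x.1 x.2 = 0}

end Cubic

namespace ZMod

/-- Multiplication by `p`, which is well defined as a map `ZMod (p ^ n) → ZMod (p ^ (n + 1))`. -/
def mulP (p n : ℕ) : ZMod (p ^ n) →+ ZMod (p ^ (n + 1)) :=
  ZMod.lift _ ⟨(AddMonoidHom.mulLeft (p : ZMod (p ^ (n + 1)))).comp (Int.castAddHom _), by
    simp only [AddMonoidHom.coe_comp, Function.comp_apply, Int.coe_castAddHom, Int.cast_natCast,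
      AddMonoidHom.coe_mulLeft, ← Nat.cast_mul, ← pow_succ', natCast_self]⟩

variable {p : ℕ}

lemma mulP_intCast (n : ℕ) (a : ℤ) : mulP p n a = p * a := ZMod.lift_coe _ _ _

variable [Fact p.Prime]

lemma isUnit_iff_castHom_ne_zero {n : ℕ} (hn : n ≠ 0) (x : ZMod (p ^ n)) :
    IsUnit x ↔ castHom (dvd_pow_self p hn) (ZMod p) x ≠ 0 := by
  rw [← natCast_zmod_val x, isUnit_natCast_iff_not_dvd_pow Fact.out (Nat.pos_of_ne_zero hn),
    map_natCast, Ne, natCast_eq_zero_iff]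

lemma exists_mulP_eq_of_not_isUnit {n : ℕ} {x : ZMod (p ^ (n + 1))} (hx : ¬IsUnit x) :
    ∃ k, mulP p n k = x := by
  rw [← natCast_zmod_val x, isUnit_natCast_iff_not_dvd_pow Fact.out n.succ_pos, not_not] at hx
  obtain ⟨j, hj⟩ := hx
  exact ⟨(j : ℤ), by rw [mulP_intCast, ← natCast_zmod_val x, hj]; push_cast; rfl⟩

lemma form_mulP_eq_zero_iff (c : Cubic ℤ) {m : ℕ} (k l : ZMod (p ^ (m + 2))) :
    c.form (mulP p _ k) (mulP p _ l) = 0 ↔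
      c.form (castHom (pow_dvd_pow p (by omega : m ≤ m + 2)) (ZMod (p ^ m)) k)
        (castHom (pow_dvd_pow p (by omega : m ≤ m + 2)) (ZMod (p ^ m)) l) = 0 := by
  obtain ⟨a, rfl⟩ := intCast_surjective k
  obtain ⟨b, rfl⟩ := intCast_surjective l
  have hcast {M : ℕ} (x y : ℤ) :
      c.form (x : ZMod M) (y : ZMod M) = ((c.form x y : ℤ) : ZMod M) :=
    (c.map_form (Int.castRingHom (ZMod M)).toIntAlgHom x y).symm
  rw [mulP_intCast, mulP_intCast, map_intCast, map_intCast, hcast, ← Int.cast_natCast,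
    ← Int.cast_mul, ← Int.cast_mul, hcast, c.form_mul_mul, intCast_zmod_eq_zero_iff_dvd,
    intCast_zmod_eq_zero_iff_dvd, show m + 2 + 1 = 3 + m by omega, pow_add]
  push_cast
  exact mul_dvd_mul_iff_left (pow_ne_zero 3 (by exact_mod_cast (Fact.out : p.Prime).ne_zero))

lemma eq_of_aeval_eq_zero_of_castHom_eq {n : ℕ} (hn : n ≠ 0) (g : ℤ[X]) {s t : ZMod (p ^ n)}
    (hs : aeval s g = 0) (ht : aeval t g = 0)
    (hst : castHom (dvd_pow_self p hn) (ZMod p) s = castHom (dvd_pow_self p hn) (ZMod p) t)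
    (hg' : aeval (castHom (dvd_pow_self p hn) (ZMod p) s) (derivative g) ≠ 0) : s = t := by
  set π := castHom (dvd_pow_self p hn) (ZMod p)
  -- Taylor: `0 = (t - s) (g'(s) + k (t - s))`, whose second factor is `g'(s) ≠ 0` mod `p`
  obtain ⟨k, hk⟩ := binomExpansion (g.map (algebraMap ℤ (ZMod (p ^ n)))) s (t - s)
  rw [add_sub_cancel, derivative_map, eval_map_algebraMap, eval_map_algebraMap,
    eval_map_algebraMap, hs, ht] at hk
  have hunit : IsUnit (aeval s (derivative g) + k * (t - s)) := by
    rw [isUnit_iff_castHom_ne_zero hn]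
    change π.toIntAlgHom _ ≠ 0
    rw [map_add, map_mul, map_sub, ← aeval_algHom_apply]
    simpa [hst] using hg'
  have : (t - s) * (aeval s (derivative g) + k * (t - s)) = 0 := by linear_combination -hk
  exact (sub_eq_zero.mp (hunit.mul_left_eq_zero.mp this)).symm

end ZMod

namespace Cubic

variable {p : ℕ} [Fact p.Prime]

lemma card_aeval_eq_zero_zmod_le (c : Cubic ℤ) (ha : c.a = 1) (hd : ¬ (p : ℤ) ∣ c.discr)
    {n : ℕ} (hn : n ≠ 0) : Nat.card {t : ZMod (p ^ n) // aeval t c.toPoly = 0} ≤ 3 := by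
  set π := ZMod.castHom (dvd_pow_self p hn) (ZMod p)
  have hroot (t : {t : ZMod (p ^ n) // aeval t c.toPoly = 0}) : aeval (π t) c.toPoly = 0 := by
    change aeval (π.toIntAlgHom t) _ = 0
    rw [aeval_algHom_apply, t.2, map_zero]
  have hsimple (t : {t : ZMod (p ^ n) // aeval t c.toPoly = 0}) :
      aeval (π t) (derivative c.toPoly) ≠ 0 := fun h => hd <| by
    rw [← ZMod.intCast_zmod_eq_zero_iff_dvd]
    exact c.discr_eq_zero_of_aeval_derivative ha (hroot t) h
  calc Nat.card {t : ZMod (p ^ n) // aeval t c.toPoly = 0}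
      ≤ Nat.card {t : ZMod p // aeval t c.toPoly = 0} :=
        Nat.card_le_card_of_injective (fun t => ⟨π t, hroot t⟩) fun s t hst =>
          Subtype.ext (ZMod.eq_of_aeval_eq_zero_of_castHom_eq hn _ s.2 t.2
            (congrArg Subtype.val hst) (hsimple s))
    _ ≤ 3 := c.card_aeval_eq_zero_le (by simp [ha])

lemma not_isUnit_of_form_eq_zero (c : Cubic ℤ) (ha : c.a = 1) {n : ℕ} (hn : n ≠ 0)
    {x y : ZMod (p ^ n)} (hxy : c.form x y = 0) (hy : ¬IsUnit y) : ¬IsUnit x := by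
  set π := ZMod.castHom (dvd_pow_self p hn) (ZMod p)
  rw [ZMod.isUnit_iff_castHom_ne_zero hn, not_not] at hy ⊢
  have := congrArg π.toIntAlgHom hxy
  rw [map_form, map_zero, RingHom.toIntAlgHom_apply, RingHom.toIntAlgHom_apply, hy, form, ha]
    at this
  simpa only [map_one, one_mul, mul_zero, ne_eq, OfNat.ofNat_ne_zero, not_false_eq_true,
    zero_pow, add_zero, pow_eq_zero_iff] using this

lemma setOf_form_eq_zero_not_isUnit_subset (c : Cubic ℤ) (ha : c.a = 1) (n : ℕ) :
    {x : ZMod (p ^ (n + 1)) × ZMod (p ^ (n + 1)) | c.form x.1 x.2 = 0 ∧ ¬IsUnit x.2} ⊆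
      Prod.map (ZMod.mulP p n) (ZMod.mulP p n) ''
        {k | c.form (ZMod.mulP p n k.1) (ZMod.mulP p n k.2) = 0} := by
  rintro x ⟨hx, hx2⟩
  obtain ⟨k, hk⟩ := ZMod.exists_mulP_eq_of_not_isUnit
    (c.not_isUnit_of_form_eq_zero ha n.succ_ne_zero hx hx2)
  obtain ⟨l, hl⟩ := ZMod.exists_mulP_eq_of_not_isUnit hx2
  exact ⟨(k, l), by simpa [hk, hl] using hx, by simp [hk, hl]⟩

lemma numZerosMod_pow_succ_le_add_card (c : Cubic ℤ) (ha : c.a = 1) (hd : ¬ (p : ℤ) ∣ c.discr)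
    (n : ℕ) : c.numZerosMod (p ^ (n + 1)) ≤ 3 * (p ^ n * (p - 1)) +
      Nat.card {k : ZMod (p ^ n) × ZMod (p ^ n) //
        c.form (ZMod.mulP p n k.1) (ZMod.mulP p n k.2) = 0} := by
  rw [numZerosMod, Nat.card_subtype_eq_card_and_add_card_and_not _ (fun x => IsUnit x.2)]
  gcongr
  · rw [card_form_eq_zero_isUnit, Nat.card_eq_fintype_card (α := (ZMod _)ˣ),
      ZMod.card_units_eq_totient, Nat.totient_prime_pow_succ Fact.out]
    exact Nat.mul_le_mul_right _ (c.card_aeval_eq_zero_zmod_le ha hd n.succ_ne_zero)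
  · exact (Nat.card_mono (Set.toFinite _) (c.setOf_form_eq_zero_not_isUnit_subset ha n)).trans
      (Nat.card_image_le (Set.toFinite _))

lemma card_form_mulP_eq_zero (c : Cubic ℤ) (m : ℕ) :
    Nat.card {k : ZMod (p ^ (m + 2)) × ZMod (p ^ (m + 2)) //
      c.form (ZMod.mulP p _ k.1) (ZMod.mulP p _ k.2) = 0} = p ^ 4 * c.numZerosMod (p ^ m) := by
  set π := ZMod.castHom (pow_dvd_pow p (by omega : m ≤ m + 2)) (ZMod (p ^ m))
  set f := π.toAddMonoidHom.prodMap π.toAddMonoidHom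
  have hπ : Function.Surjective π := ZMod.ringHom_surjective π
  have hf : Function.Surjective f := hπ.prodMap hπ
  have hker : Nat.card f.ker = p ^ 4 := by
    have := f.card_preimage_of_surjective hf Set.univ
    rw [Set.preimage_univ, Nat.card_univ, Nat.card_univ, Nat.card_prod, Nat.card_prod,
      Nat.card_zmod, Nat.card_zmod] at this
    have hp := (Fact.out : p.Prime).pos
    refine Nat.eq_of_mul_eq_mul_left (by positivity : 0 < p ^ m * p ^ m) ?_
    rw [← this]
    ring
  calc _ = Nat.card (f ⁻¹' {y | c.form y.1 y.2 = 0}) :=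
        Nat.card_congr <| Equiv.subtypeEquivRight fun k => ZMod.form_mulP_eq_zero_iff c k.1 k.2
    _ = p ^ 4 * c.numZerosMod (p ^ m) := by
        rw [f.card_preimage_of_surjective hf, hker, mul_comm]; rfl

lemma numZerosMod_le_sq (c : Cubic ℤ) (M : ℕ) [NeZero M] : c.numZerosMod M ≤ M ^ 2 :=
  (Finite.card_subtype_le _).trans_eq (by rw [Nat.card_prod, Nat.card_zmod, sq])

lemma numZerosMod_pow_succ_le (c : Cubic ℤ) (ha : c.a = 1) (hd : ¬ (p : ℤ) ∣ c.discr)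
    (n : ℕ) : c.numZerosMod (p ^ (n + 1)) ≤ 3 * (p ^ n * (p - 1)) + p ^ (2 * n) := by
  refine (c.numZerosMod_pow_succ_le_add_card ha hd n).trans (Nat.add_le_add_left ?_ _)
  exact (Finite.card_subtype_le _).trans_eq
    (by rw [Nat.card_prod, Nat.card_zmod, ← sq, ← pow_mul, mul_comm])

lemma numZerosMod_pow_add_three_le (c : Cubic ℤ) (ha : c.a = 1) (hd : ¬ (p : ℤ) ∣ c.discr)
    (m : ℕ) :
    c.numZerosMod (p ^ (m + 3)) ≤ 3 * (p ^ (m + 2) * (p - 1)) + p ^ 4 * c.numZerosMod (p ^ m) :=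
  (c.numZerosMod_pow_succ_le_add_card ha hd (m + 2)).trans_eq (by rw [card_form_mulP_eq_zero])

lemma numZerosMod_pow_le (c : Cubic ℤ) (ha : c.a = 1) (hd : ¬ (p : ℤ) ∣ c.discr) (α : ℕ) :
    (c.numZerosMod (p ^ α) : ℝ) ≤
      3 * ((p : ℝ) ^ α * ((p : ℝ) ^ ((α + 2) / 3) - 1) / p) +
        (p : ℝ) ^ (2 * (α - (α + 2) / 3)) := by
  have hp0 : (p : ℝ) ≠ 0 := by exact_mod_cast (Fact.out : p.Prime).ne_zero
  have hp1 : 1 ≤ p := (Fact.out : p.Prime).one_le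
  induction α using Nat.strong_induction_on with
  | _ α ih =>
  match α with
  | 0 =>
    have := (Nat.cast_le (α := ℝ)).mpr (c.numZerosMod_le_sq (p ^ 0))
    norm_num at this ⊢
    exact this
  | 1 =>
    have := (Nat.cast_le (α := ℝ)).mpr (c.numZerosMod_pow_succ_le ha hd 0)
    push_cast [Nat.cast_sub hp1] at this
    refine this.trans_eq ?_
    field_simp
    norm_num
  | 2 =>
    have := (Nat.cast_le (α := ℝ)).mpr (c.numZerosMod_pow_succ_le ha hd 1)
    push_cast [Nat.cast_sub hp1] at this
    refine this.trans_eq ?_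
    field_simp
    ring
  | m + 3 =>
    have hstep := (Nat.cast_le (α := ℝ)).mpr (c.numZerosMod_pow_add_three_le ha hd m)
    push_cast [Nat.cast_sub hp1] at hstep
    refine hstep.trans ?_
    have hb : (m + 3 + 2) / 3 = (m + 2) / 3 + 1 := by omega
    have he : 2 * (m + 3 - ((m + 2) / 3 + 1)) = 2 * (m - (m + 2) / 3) + 4 := by omega
    rw [hb, he]
    calc _ ≤ 3 * ((p : ℝ) ^ (m + 2) * (p - 1)) + p ^ 4 *
          (3 * ((p : ℝ) ^ m * ((p : ℝ) ^ ((m + 2) / 3) - 1) / p) +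
            (p : ℝ) ^ (2 * (m - (m + 2) / 3))) := by
          gcongr; exact ih m (by omega)
      _ = _ := by field_simp; ring

end Cubic

lemma Real.pow_le_rpow_of_exponent_le {p : ℝ} (hp : 1 ≤ p) {n : ℕ} {x : ℝ}
    (h : (n : ℝ) ≤ x) : p ^ n ≤ p ^ x := by
  rw [← Real.rpow_natCast]
  exact Real.rpow_le_rpow_of_exponent_le hp h

lemma pow_mul_pow_sub_one_div_le {p : ℝ} (hp : 1 < p) (a b : ℕ) :
    p ^ a * (p ^ b - 1) / p ≤ p ^ (a + b) / (p - 1) := by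
  rw [pow_add]
  gcongr <;> linarith

lemma pow_mul_pow_sub_one_div_le_rpow {p : ℝ} (hp : 1 < p) (a b : ℕ) {x : ℝ}
    (h : (a + b : ℝ) ≤ x + 1) : p ^ a * (p ^ b - 1) / p ≤ p ^ x := by
  rw [div_le_iff₀ (by linarith), ← Real.rpow_add_one (by positivity)]
  calc p ^ a * (p ^ b - 1) ≤ p ^ (a + b) := by rw [pow_add]; gcongr; linarith
    _ ≤ p ^ (x + 1) := Real.pow_le_rpow_of_exponent_le hp.le (by push_cast; exact h)

/-- For a monic cubic `f` over `ℤ` and a prime `p` not dividing its discriminant, the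
number `ρ₁(p^α)` of pairs `(a,b)` mod `p^α` with `f(a,b) ≡ 0 (mod p^α)` (homogenized `f`)
satisfies `ρ₁(p^α) ≤ 3 p^{α+⌈α/3⌉}/(p−1) + p^{2(α−⌈α/3⌉)}`, and consequently
`ρ₁(p^α) ≪ p^{4α/3}` with an absolute implied constant.  (Here `⌈α/3⌉ = (α+2)/3` in
natural-number arithmetic.) -/
theorem stmt_8 :
    ∃ C : ℝ, 0 < C ∧
      ∀ (p : ℕ), p.Prime → ∀ (c : Cubic ℤ), c.a = 1 → ¬ (p : ℤ) ∣ c.discr → ∀ α : ℕ,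
        ((Nat.card {x : ZMod (p ^ α) × ZMod (p ^ α) //
            (c.a : ZMod (p ^ α)) * x.1 ^ 3 + (c.b : ZMod (p ^ α)) * x.1 ^ 2 * x.2 +
              (c.c : ZMod (p ^ α)) * x.1 * x.2 ^ 2 + (c.d : ZMod (p ^ α)) * x.2 ^ 3 = 0} : ℝ) ≤
          3 * (p : ℝ) ^ (α + (α + 2) / 3) / ((p : ℝ) - 1) +
            (p : ℝ) ^ (2 * (α - (α + 2) / 3))) ∧
        ((Nat.card {x : ZMod (p ^ α) × ZMod (p ^ α) //
            (c.a : ZMod (p ^ α)) * x.1 ^ 3 + (c.b : ZMod (p ^ α)) * x.1 ^ 2 * x.2 +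
              (c.c : ZMod (p ^ α)) * x.1 * x.2 ^ 2 + (c.d : ZMod (p ^ α)) * x.2 ^ 3 = 0} : ℝ) ≤
          C * (p : ℝ) ^ ((4 * (α : ℝ)) / 3)) := by
  refine ⟨4, by norm_num, fun p hp c ha hd α => ?_⟩
  have : Fact p.Prime := ⟨hp⟩
  have hp1 : (1 : ℝ) < p := by exact_mod_cast hp.one_lt
  have hN := c.numZerosMod_pow_le ha hd α
  have hb : (3 * ((α + 2) / 3 : ℕ) : ℝ) ≤ α + 2 := by exact_mod_cast Nat.mul_div_le (α + 2) 3
  have hb' : (α : ℝ) ≤ 3 * ((α + 2) / 3 : ℕ) := by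
    exact_mod_cast (by omega : α ≤ 3 * ((α + 2) / 3))
  refine ⟨hN.trans ?_, hN.trans ?_⟩
  · rw [mul_div_assoc 3]
    gcongr 3 * ?_ + _
    exact pow_mul_pow_sub_one_div_le hp1 _ _
  · calc _ ≤ 3 * (p : ℝ) ^ (4 * (α : ℝ) / 3) + (p : ℝ) ^ (4 * (α : ℝ) / 3) := by
          gcongr
          · exact pow_mul_pow_sub_one_div_le_rpow hp1 _ _ (by linarith)
          · refine Real.pow_le_rpow_of_exponent_le hp1.le ?_
            rw [Nat.cast_mul, Nat.cast_sub (by omega)]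
            linarith
      _ = 4 * (p : ℝ) ^ (4 * (α : ℝ) / 3) := by ring
end
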